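/- arXiv:1902.05302 — 6 statements merged into one kernel-verified Lean document; each statement's English description precedes it below -/
import Mathlib

section
/- For every integer r ≥ 1, the one-variable polynomial F_{r,1}(x) has degree r^2 and its leading coefficient equals [1!·2!⋯(r−1)!]^3 / (r!·(r+1)!⋯(2r−1)!). -/
open Nat

/-- The one-variable polynomial `F_{r,1}(x)`: the determinant of the r×r matrix whose
rows are indexed by `n = 1,…,r`, columns by `m = 0,…,r−1`, with `(n,m)` entry
`B_{n+m}(x)/(n+m)`, where `B_k` is the k-th Bernoulli polynomial. -/
noncomputable def Fone (r : ℕ) : Polynomial ℚ :=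
  Matrix.det (Matrix.of fun (n m : Fin r) =>
    Polynomial.C ((((n : ℕ) + 1 + (m : ℕ) : ℕ) : ℚ))⁻¹ *
      Polynomial.bernoulli ((n : ℕ) + 1 + (m : ℕ)))

/-! The coefficient of degree `∑ aᵢ + ∑ bⱼ` of a determinant whose `(i, j)` entry has degree at
most `aᵢ + bⱼ` is the determinant of those coefficients. Since `B_k` is monic of degree `k`, the
coefficient of `x^{r²}` in `F_{r,1}` is thus the determinant of the Hilbert matrix
`(1/(i + j + 1))_{0 ≤ i, j < r}`. Cauchy's formula gives it as `(∏ i!)² / ∏_{i,j} (i + j + 1)`,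
and `∏_j (i + j + 1) = (r + i)! / i!`; being nonzero, it is the leading coefficient. -/

open Finset Matrix Polynomial

section Cauchy

variable {K : Type*} [Field K]

theorem Matrix.det_succ_eq_mul_det_schur {n : ℕ} (A : Matrix (Fin (n + 1)) (Fin (n + 1)) K)
    (h : A 0 0 ≠ 0) :
    A.det = A 0 0 *
      (of fun i j : Fin n => A i.succ j.succ - A i.succ 0 / A 0 0 * A 0 j.succ).det := by
  set B : Matrix (Fin (n + 1)) (Fin (n + 1)) K :=
    of fun i j => Fin.cases (A 0 j) (fun i => A i.succ j - A i.succ 0 / A 0 0 * A 0 j) i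
  have hAB : A.det = B.det :=
    det_eq_of_forall_row_eq_smul_add_const (Fin.cases 0 fun i => A i.succ 0 / A 0 0) 0 rfl
      fun i j => by cases i using Fin.cases <;> simp [B]
  rw [hAB, det_succ_column_zero, Fin.sum_univ_succ, Finset.sum_eq_zero fun i _ => by simp [B, h]]
  simp [B, submatrix]

theorem det_vandermonde_succ {R : Type*} [CommRing R] {n : ℕ} (v : Fin (n + 1) → R) :
    (vandermonde v).det = (∏ i : Fin n, (v i.succ - v 0)) * (vandermonde (Fin.tail v)).det := by
  simp [det_vandermonde, Fin.prod_univ_succ, Fin.prod_Ioi_succ, Fin.tail]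

theorem prod_prod_add_succ {n : ℕ} (x y : Fin (n + 1) → K) :
    ∏ i, ∏ j, (x i + y j) = (x 0 + y 0) * (∏ i : Fin n, (x i.succ + y 0)) *
      (∏ j : Fin n, (x 0 + y j.succ)) *
        ∏ i : Fin n, ∏ j : Fin n, (Fin.tail x i + Fin.tail y j) := by
  simp only [Fin.prod_univ_succ, prod_mul_distrib, Fin.tail]
  ring

theorem det_cauchy {n : ℕ} (x y : Fin n → K) (h : ∀ i j, x i + y j ≠ 0) :
    (of fun i j => (x i + y j)⁻¹).det =
      (vandermonde x).det * (vandermonde y).det / ∏ i, ∏ j, (x i + y j) := by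
  induction n with
  | zero => simp
  | succ n ih =>
    -- the Schur complement of the corner entry is a Cauchy matrix rescaled by rows and columns
    have hschur : (of fun i j : Fin n => (x i.succ + y j.succ)⁻¹ -
        (x i.succ + y 0)⁻¹ / (x 0 + y 0)⁻¹ * (x 0 + y j.succ)⁻¹).det =
        (∏ i : Fin n, (x i.succ - x 0) / (x i.succ + y 0)) *
          ((∏ j : Fin n, (y j.succ - y 0) / (x 0 + y j.succ)) *
            (of fun i j => (Fin.tail x i + Fin.tail y j)⁻¹).det) := by
      rw [← det_mul_row, ← det_mul_column]
      congr 1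
      ext i j
      have h₁ := h i.succ j.succ
      have h₂ := h i.succ 0
      have h₃ := h 0 j.succ
      simp only [of_apply, Fin.tail]
      field_simp
      ring
    rw [det_succ_eq_mul_det_schur _ (by simpa using h 0 0)]
    simp only [of_apply]
    rw [hschur, ih (Fin.tail x) (Fin.tail y) fun i j => h _ _, det_vandermonde_succ x,
      det_vandermonde_succ y, prod_prod_add_succ]
    simp only [prod_div_distrib]
    field_simp

end Cauchy

section CoeffDet

variable {R : Type*} [CommRing R]

theorem coeff_prod_sum_of_natDegree_le {ι : Type*} (s : Finset ι) (f : ι → R[X]) (d : ι → ℕ)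
    (h : ∀ i ∈ s, (f i).natDegree ≤ d i) :
    (∏ i ∈ s, f i).coeff (∑ i ∈ s, d i) = ∏ i ∈ s, (f i).coeff (d i) := by
  classical
  induction s using Finset.induction_on with
  | empty => simp
  | insert a s ha ih =>
    rw [prod_insert ha, sum_insert ha, prod_insert ha,
      coeff_mul_add_eq_of_natDegree_le (h a (mem_insert_self a s)),
      ih fun i hi => h i (mem_insert_of_mem hi)]
    exact (natDegree_prod_le _ _).trans (sum_le_sum fun i hi => h i (mem_insert_of_mem hi))

theorem sum_comp_perm_add {n : Type*} [Fintype n] (a b : n → ℕ) (σ : Equiv.Perm n) :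
    ∑ i, (a (σ i) + b i) = ∑ i, a i + ∑ j, b j := by
  rw [sum_add_distrib, Equiv.sum_comp σ a]

variable {n : Type*} [Fintype n] [DecidableEq n] (M : Matrix n n R[X]) (a b : n → ℕ)

theorem natDegree_det_le_of_natDegree_le (h : ∀ i j, (M i j).natDegree ≤ a i + b j) :
    M.det.natDegree ≤ ∑ i, a i + ∑ j, b j := by
  rw [det_apply']
  refine natDegree_sum_le_of_forall_le _ _ fun σ _ => ?_
  refine natDegree_mul_le.trans ?_
  rw [natDegree_intCast, zero_add, ← sum_comp_perm_add a b σ]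
  exact (natDegree_prod_le _ _).trans (sum_le_sum fun i _ => h _ _)

theorem coeff_det_of_natDegree_le (h : ∀ i j, (M i j).natDegree ≤ a i + b j) :
    M.det.coeff (∑ i, a i + ∑ j, b j) = (of fun i j => (M i j).coeff (a i + b j)).det := by
  rw [det_apply', det_apply', finsetSum_coeff]
  refine sum_congr rfl fun σ _ => ?_
  rw [coeff_intCast_mul, ← sum_comp_perm_add a b σ,
    coeff_prod_sum_of_natDegree_le _ _ _ fun i _ => h _ _]
  simp

end CoeffDet

theorem Polynomial.natDegree_bernoulli_le (n : ℕ) : (bernoulli n).natDegree ≤ n :=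
  natDegree_sum_le_of_forall_le _ _ fun _ _ => natDegree_monomial_le _ |>.trans (Nat.sub_le _ _)

theorem Polynomial.coeff_bernoulli_self (n : ℕ) : (bernoulli n).coeff n = 1 := by
  rw [bernoulli, finsetSum_coeff, sum_eq_single 0]
  · simp
  · intro k hk hk0
    rw [mem_range] at hk
    rw [coeff_monomial, if_neg (by omega)]
  · simp

theorem det_vandermonde_natCast (R : Type*) [CommRing R] (n : ℕ) :
    (vandermonde fun i : Fin n => (i : R)).det = ∏ i ∈ range n, (i ! : R) := by
  cases n with
  | zero => simp
  | succ n =>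
    rw [det_vandermonde_id_eq_superFactorial, ← prod_range_succ_factorial]
    push_cast
    rfl

theorem factorial_mul_prod_range_add_one_add (i r : ℕ) :
    (i ! : ℚ) * ∏ j ∈ range r, ((i : ℚ) + 1 + j) = ((r + i)! : ℚ) := by
  rw [add_comm r, ← factorial_mul_ascFactorial, ascFactorial_eq_prod_range]
  push_cast
  rfl

theorem det_hilbert (r : ℕ) :
    (of fun i j : Fin r => ((i : ℚ) + 1 + j)⁻¹).det =
      (∏ i ∈ range r, (i ! : ℚ)) ^ 3 / ∏ i ∈ range r, ((r + i)! : ℚ) := by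
  have hden : ∏ i ∈ range r, ((r + i)! : ℚ) =
      (∏ i ∈ range r, (i ! : ℚ)) * ∏ i : Fin r, ∏ j : Fin r, ((i : ℚ) + 1 + j) := by
    rw [Fin.prod_univ_eq_prod_range (fun i => ∏ j : Fin r, ((i : ℚ) + 1 + j)),
      ← prod_mul_distrib]
    refine prod_congr rfl fun i _ => ?_
    rw [Fin.prod_univ_eq_prod_range (fun j => (i : ℚ) + 1 + j),
      factorial_mul_prod_range_add_one_add]
  rw [det_cauchy (fun i : Fin r => (i : ℚ) + 1) (fun j => (j : ℚ)) fun i j => by positivity,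
    det_vandermonde_add, det_vandermonde_natCast, hden]
  have : ∏ i ∈ range r, (i ! : ℚ) ≠ 0 := prod_ne_zero_iff.2 fun i _ => by positivity
  field_simp

theorem sum_range_add_one_add_sum_range (r : ℕ) :
    ∑ i ∈ range r, (i + 1) + ∑ i ∈ range r, i = r ^ 2 := by
  induction r with
  | zero => rfl
  | succ r ih => rw [sum_range_succ, sum_range_succ]; linarith

theorem Fone_natDegree_leadingCoeff_general (r : ℕ) :
    (Fone r).natDegree = r ^ 2 ∧
      (Fone r).leadingCoeff =
        (∏ i ∈ Finset.range r, (i ! : ℚ)) ^ 3 / ∏ i ∈ Finset.range r, ((r + i)! : ℚ) := by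
  let M : Matrix (Fin r) (Fin r) ℚ[X] := of fun i j =>
    C ((((i : ℕ) + 1 + (j : ℕ) : ℕ) : ℚ))⁻¹ * Polynomial.bernoulli ((i : ℕ) + 1 + (j : ℕ))
  have hentry (i j : Fin r) : (M i j).natDegree ≤ ((i : ℕ) + 1) + j :=
    natDegree_C_mul_le _ _ |>.trans (natDegree_bernoulli_le _)
  have hsum : ∑ i : Fin r, ((i : ℕ) + 1) + ∑ j : Fin r, (j : ℕ) = r ^ 2 := by
    rw [Fin.sum_univ_eq_sum_range (· + 1), Fin.sum_univ_eq_sum_range (fun j => j)]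
    exact sum_range_add_one_add_sum_range r
  have hcoeff : (Fone r).coeff (r ^ 2) =
      (∏ i ∈ range r, (i ! : ℚ)) ^ 3 / ∏ i ∈ range r, ((r + i)! : ℚ) := by
    rw [← hsum, Fone, coeff_det_of_natDegree_le M _ _ hentry, ← det_hilbert]
    simp [M, coeff_bernoulli_self]
  have hdeg : (Fone r).natDegree = r ^ 2 :=
    natDegree_eq_of_le_of_coeff_ne_zero (hsum ▸ natDegree_det_le_of_natDegree_le M _ _ hentry)
      (by rw [hcoeff]; positivity)
  exact ⟨hdeg, by rw [leadingCoeff, hdeg, hcoeff]⟩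

/-- For every r ≥ 1, `F_{r,1}(x)` has degree `r²` and its leading
coefficient equals `[1!·2!⋯(r−1)!]³ / (r!·(r+1)!⋯(2r−1)!)`. -/
theorem Fone_natDegree_leadingCoeff (r : ℕ) (hr : 1 ≤ r) :
    (Fone r).natDegree = r ^ 2 ∧
      (Fone r).leadingCoeff =
        (∏ i ∈ Finset.range r, (i ! : ℚ)) ^ 3 / ∏ i ∈ Finset.range r, ((r + i)! : ℚ) :=
  Fone_natDegree_leadingCoeff_general r
end

section
/- For every integer D ≥ 1, if G ∈ ℚ[x_1,…,x_D] satisfies F_{1,D}(x_1,…,x_D) = ∏_{1≤i<j≤D}(x_j−x_i) · G(x_1,…,x_D), then the homogeneous component of G of top degree D equals (1/D!)·x_1 x_2 ⋯ x_D. -/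
/-!
Each entry `B_n(x_v)/n` of the matrix defining `F_{1,D}` is `x_v^n/n` plus terms of lower
degree, so the component of `F_{1,D}` of degree `1 + ⋯ + D` is
`det (x_v^n/n) = (1/D!) x_1⋯x_D ∏_{i<j}(x_j - x_i)`.
The Vandermonde product is homogeneous of degree `0 + 1 + ⋯ + (D-1)`, so that component of
`∏_{i<j}(x_j - x_i) · G` is the Vandermonde product times the degree-`D` component of `G`;
cancelling it in the domain `ℚ[x_1,…,x_D]` gives the claim.
-/

open Nat Finset

/-- `F_{r,D}(x_1,…,x_D)`: the determinant of the rD×rD matrix whose rows are indexed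
(in lexicographic order) by pairs `(i,j)`, corresponding to `n = i·D + j + 1 ∈ {1,…,rD}`,
and whose columns are indexed by pairs `(m,v)` with `0 ≤ m ≤ r−1`, `1 ≤ v ≤ D`
(ordered lexicographically), with `(n,(m,v))` entry `B_{n+m}(x_v)/(n+m)`. -/
noncomputable def Fpoly (r D : ℕ) : MvPolynomial (Fin D) ℚ :=
  Matrix.det (Matrix.of fun (p q : Fin r × Fin D) =>
    MvPolynomial.C ((((p.1 : ℕ) * D + (p.2 : ℕ) + 1 + (q.1 : ℕ) : ℕ) : ℚ))⁻¹ *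
      Polynomial.aeval (MvPolynomial.X q.2)
        (Polynomial.bernoulli ((p.1 : ℕ) * D + (p.2 : ℕ) + 1 + (q.1 : ℕ))))

/-- The Vandermonde product `∏_{1 ≤ i < j ≤ D} (x_j − x_i)`. -/
noncomputable def vand (D : ℕ) : MvPolynomial (Fin D) ℚ :=
  ∏ p ∈ Finset.univ.filter (fun p : Fin D × Fin D => p.1 < p.2),
    (MvPolynomial.X p.2 - MvPolynomial.X p.1)

/-- The rD×rD matrix with rows `n = 1,…,rD` (encoded as pairs `(i,j)`, `n = i·D+j+1`,
in lexicographic order), columns indexed by pairs `(m,v)`, `0 ≤ m ≤ r−1`, `1 ≤ v ≤ D`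
(`v` encoded as `q.2 + 1`), and `(n,(m,v))` entry `D^{n+m−1}·B_{n+m}(v/D)/(n+m)`. -/
noncomputable def deltaMat (r D : ℕ) : Matrix (Fin r × Fin D) (Fin r × Fin D) ℚ :=
  Matrix.of fun p q =>
    (D : ℚ) ^ ((p.1 : ℕ) * D + (p.2 : ℕ) + (q.1 : ℕ)) *
      (Polynomial.bernoulli ((p.1 : ℕ) * D + (p.2 : ℕ) + 1 + (q.1 : ℕ))).eval
        (((q.2 : ℕ) + 1 : ℚ) / D) /
      (((p.1 : ℕ) * D + (p.2 : ℕ) + 1 + (q.1 : ℕ) : ℕ) : ℚ)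

/-- `Δ_{r,D}`. -/
noncomputable def delta (r D : ℕ) : ℚ := (deltaMat r D).det

theorem Polynomial.natDegree_bernoulli_succ_sub_X_pow_le (n : ℕ) :
    (Polynomial.bernoulli (n + 1) - Polynomial.X ^ (n + 1)).natDegree ≤ n := by
  refine Polynomial.natDegree_le_iff_coeff_eq_zero.2 fun k hk => ?_
  rw [Polynomial.coeff_sub, Polynomial.coeff_bernoulli, Polynomial.coeff_X_pow]
  rcases (Nat.succ_le_of_lt hk).eq_or_lt with rfl | hk'
  · simp
  · simp [hk'.not_ge, hk'.ne']

namespace MvPolynomial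

section CommSemiring

variable {σ R : Type*} [CommSemiring R]

attribute [local instance] MvPolynomial.gradedAlgebra in
theorem IsHomogeneous.homogeneousComponent_add_mul {p : MvPolynomial σ R} {m : ℕ}
    (hp : p.IsHomogeneous m) (q : MvPolynomial σ R) (n : ℕ) :
    homogeneousComponent (m + n) (p * q) = p * homogeneousComponent n q := by
  simpa [← decomposition.decompose'_apply] using
    DirectSum.coe_decompose_mul_add_of_left_mem (homogeneousSubmodule σ R) (b := q) (j := n) hp

theorem totalDegree_aeval_X_le (f : Polynomial R) (i : σ) :
    (Polynomial.aeval (X i : MvPolynomial σ R) f).totalDegree ≤ f.natDegree := by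
  rw [Polynomial.aeval_eq_sum_range]
  refine (totalDegree_finsetSum _ _).trans (Finset.sup_le fun k hk => ?_)
  refine (totalDegree_smul_le _ _).trans ((isHomogeneous_X_pow i k).totalDegree_le.trans ?_)
  simpa [Nat.lt_succ_iff] using hk

end CommSemiring

section CommRing

variable {σ R ι : Type*} [CommRing R]

theorem isHomogeneous_det {n : Type*} [Fintype n] [DecidableEq n]
    (M : Matrix n n (MvPolynomial σ R)) (d : n → ℕ) (hM : ∀ i j, (M i j).IsHomogeneous (d i)) :
    M.det.IsHomogeneous (∑ i, d i) := by
  rw [Matrix.det_apply]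
  refine (homogeneousSubmodule σ R _).sum_mem fun τ _ => Submodule.smul_of_tower_mem _ _ ?_
  rw [mem_homogeneousSubmodule, ← Equiv.sum_comp τ d]
  exact IsHomogeneous.prod _ _ _ fun i _ => hM _ _

theorem homogeneousComponent_eq_of_totalDegree_sub_lt {p t : MvPolynomial σ R} {d : ℕ}
    (ht : t.IsHomogeneous d) (hpt : (p - t).totalDegree < d) :
    homogeneousComponent d p = t := by
  rw [← add_sub_cancel t p, map_add, homogeneousComponent_of_mem ht, if_pos rfl,
    homogeneousComponent_eq_zero _ _ hpt, add_zero]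

theorem totalDegree_mul_sub_mul_lt {p₁ p₂ t₁ t₂ : MvPolynomial σ R} {d₁ d₂ : ℕ}
    (ht₁ : t₁.IsHomogeneous d₁) (hpt₁ : (p₁ - t₁).totalDegree < d₁)
    (ht₂ : t₂.IsHomogeneous d₂) (hpt₂ : (p₂ - t₂).totalDegree < d₂) :
    (p₁ * p₂ - t₁ * t₂).totalDegree < d₁ + d₂ := by
  have hp₂ : p₂.totalDegree ≤ d₂ := by
    calc p₂.totalDegree = (t₂ + (p₂ - t₂)).totalDegree := by rw [add_sub_cancel]
      _ ≤ max t₂.totalDegree (p₂ - t₂).totalDegree := totalDegree_add _ _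
      _ ≤ d₂ := max_le ht₂.totalDegree_le hpt₂.le
  calc (p₁ * p₂ - t₁ * t₂).totalDegree = ((p₁ - t₁) * p₂ + t₁ * (p₂ - t₂)).totalDegree := by
        congr 1; ring
    _ ≤ max ((p₁ - t₁) * p₂).totalDegree (t₁ * (p₂ - t₂)).totalDegree := totalDegree_add _ _
    _ < d₁ + d₂ := max_lt
        ((totalDegree_mul _ _).trans_lt (by omega))
        ((totalDegree_mul _ _).trans_lt (by have := ht₁.totalDegree_le; omega))

theorem totalDegree_prod_sub_prod_lt {s : Finset ι} (hs : s.Nonempty)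
    {p t : ι → MvPolynomial σ R} {d : ι → ℕ}
    (ht : ∀ i ∈ s, (t i).IsHomogeneous (d i)) (hpt : ∀ i ∈ s, (p i - t i).totalDegree < d i) :
    (∏ i ∈ s, p i - ∏ i ∈ s, t i).totalDegree < ∑ i ∈ s, d i := by
  induction hs using Finset.Nonempty.cons_induction with
  | singleton i => simpa using hpt i (mem_singleton_self i)
  | cons i s hi hs ih =>
    simp only [prod_cons, sum_cons]
    refine totalDegree_mul_sub_mul_lt (ht i (mem_cons_self i s)) (hpt i (mem_cons_self i s))
      (IsHomogeneous.prod _ _ _ fun j hj => ht j (mem_cons_of_mem hj))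
      (ih (fun j hj => ht j (mem_cons_of_mem hj)) (fun j hj => hpt j (mem_cons_of_mem hj)))

theorem homogeneousComponent_det_eq_det {n : Type*} [Fintype n] [DecidableEq n]
    {M T : Matrix n n (MvPolynomial σ R)} {d : n → ℕ}
    (hT : ∀ i j, (T i j).IsHomogeneous (d i)) (hMT : ∀ i j, (M i j - T i j).totalDegree < d i) :
    homogeneousComponent (∑ i, d i) M.det = T.det := by
  cases isEmpty_or_nonempty n
  · simp [homogeneousComponent_zero]
  refine homogeneousComponent_eq_of_totalDegree_sub_lt (isHomogeneous_det T d hT) ?_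
  have hd : 0 < ∑ i, d i := by
    obtain ⟨i⟩ := ‹Nonempty n›
    exact (hMT i i).trans_le' (Nat.zero_le _) |>.trans_le
      (single_le_sum (fun _ _ => Nat.zero_le _) (mem_univ i))
  rw [Matrix.det_apply, Matrix.det_apply, ← sum_sub_distrib]
  refine (totalDegree_finsetSum _ _).trans_lt ((Finset.sup_lt_iff hd).2 fun τ _ => ?_)
  rw [← smul_sub]
  refine (totalDegree_smul_le _ _).trans_lt ?_
  rw [← Equiv.sum_comp τ d]
  exact totalDegree_prod_sub_prod_lt univ_nonempty (fun i _ => hT _ _) (fun i _ => hMT _ _)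

end CommRing

end MvPolynomial

open MvPolynomial

theorem vand_eq_det_vandermonde (D : ℕ) : vand D = (Matrix.vandermonde X).det := by
  rw [Matrix.det_vandermonde, vand, prod_filter, Fintype.prod_prod_type]
  refine prod_congr rfl fun i _ => ?_
  rw [← prod_filter]
  congr 1
  ext j
  simp

theorem isHomogeneous_vand (D : ℕ) : (vand D).IsHomogeneous (∑ i : Fin D, (i : ℕ)) := by
  rw [vand_eq_det_vandermonde, ← Matrix.det_transpose]
  exact isHomogeneous_det _ _ fun i j => isHomogeneous_X_pow _ _

theorem vand_ne_zero (D : ℕ) : vand D ≠ 0 := by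
  rw [vand_eq_det_vandermonde]
  exact Matrix.det_vandermonde_ne_zero_iff.2 X_injective

noncomputable def bernoulliMat (D : ℕ) : Matrix (Fin D) (Fin D) (MvPolynomial (Fin D) ℚ) :=
  Matrix.of fun i j =>
    C (((i : ℕ) + 1 : ℕ) : ℚ)⁻¹ * Polynomial.aeval (X j) (Polynomial.bernoulli ((i : ℕ) + 1))

noncomputable def bernoulliLeadingMat (D : ℕ) : Matrix (Fin D) (Fin D) (MvPolynomial (Fin D) ℚ) :=
  Matrix.of fun i j => C (((i : ℕ) + 1 : ℕ) : ℚ)⁻¹ * X j ^ ((i : ℕ) + 1)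

theorem Fpoly_one_eq_det_bernoulliMat (D : ℕ) : Fpoly 1 D = (bernoulliMat D).det := by
  rw [Fpoly, ← Matrix.det_submatrix_equiv_self (Equiv.uniqueProd (Fin D) (Fin 1)).symm]
  congr 1
  ext i j
  simp [bernoulliMat]

theorem homogeneousComponent_det_bernoulliMat (D : ℕ) :
    homogeneousComponent (∑ i : Fin D, ((i : ℕ) + 1)) (bernoulliMat D).det =
      (bernoulliLeadingMat D).det := by
  refine homogeneousComponent_det_eq_det (fun i j => isHomogeneous_C_mul_X_pow _ _ _)
    fun i j => ?_
  rw [bernoulliMat, bernoulliLeadingMat, Matrix.of_apply, Matrix.of_apply, ← mul_sub,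
    ← Polynomial.aeval_X_pow (R := ℚ), ← map_sub]
  refine (totalDegree_mul _ _).trans_lt ?_
  rw [totalDegree_C, zero_add, Nat.lt_succ_iff]
  exact (totalDegree_aeval_X_le _ _).trans (Polynomial.natDegree_bernoulli_succ_sub_X_pow_le _)

theorem det_bernoulliLeadingMat (D : ℕ) :
    (bernoulliLeadingMat D).det = C ((D ! : ℚ))⁻¹ * ((∏ i, X i) * vand D) := by
  have hfactor : bernoulliLeadingMat D =
      Matrix.diagonal (fun i : Fin D => C (((i : ℕ) + 1 : ℕ) : ℚ)⁻¹) *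
        (Matrix.vandermonde X).transpose * Matrix.diagonal X := by
    ext i j
    simp [bernoulliLeadingMat, Matrix.vandermonde_apply, pow_succ, mul_assoc]
  rw [hfactor, Matrix.det_mul, Matrix.det_mul, Matrix.det_diagonal, Matrix.det_diagonal,
    Matrix.det_transpose, ← vand_eq_det_vandermonde, ← map_prod, prod_inv_distrib,
    ← Nat.cast_prod, Fin.prod_univ_eq_prod_range (· + 1), prod_range_add_one_eq_factorial]
  ring

theorem top_homogeneous_component_of_G_general (D : ℕ) (G : MvPolynomial (Fin D) ℚ)
    (hG : Fpoly 1 D = vand D * G) :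
    MvPolynomial.homogeneousComponent D G =
      MvPolynomial.C ((D ! : ℚ))⁻¹ * ∏ i : Fin D, MvPolynomial.X i := by
  have hdeg : ∑ i : Fin D, ((i : ℕ) + 1) = ∑ i : Fin D, (i : ℕ) + D := by
    simp [sum_add_distrib]
  refine mul_left_cancel₀ (vand_ne_zero D) ?_
  rw [← (isHomogeneous_vand D).homogeneousComponent_add_mul, ← hG, ← hdeg,
    Fpoly_one_eq_det_bernoulliMat, homogeneousComponent_det_bernoulliMat,
    det_bernoulliLeadingMat]
  ring

/-- For D ≥ 1, if `F_{1,D} = ∏_{i<j}(x_j−x_i) · G`, then the homogeneous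
component of G of top degree D equals `(1/D!)·x_1⋯x_D`. -/
theorem top_homogeneous_component_of_G (D : ℕ) (hD : 1 ≤ D) (G : MvPolynomial (Fin D) ℚ)
    (hG : Fpoly 1 D = vand D * G) :
    MvPolynomial.homogeneousComponent D G =
      MvPolynomial.C ((D ! : ℚ))⁻¹ * ∏ i : Fin D, MvPolynomial.X i :=
  top_homogeneous_component_of_G_general D G hG
end

section
/- For every integer D ≥ 1, if G ∈ ℚ[x_1,…,x_D] satisfies F_{1,D}(x_1,…,x_D) = ∏_{1≤i<j≤D}(x_j−x_i) · G(x_1,…,x_D), then the constant term of G satisfies G(0,0,…,0) = (−1)^D/(D+1)!. -/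
open Nat Finset

/-! Substituting `x_v = (v + 1) T` turns the Vandermonde product into `c T^N` with `c ≠ 0` and
`N = D(D-1)/2`, so `c G(0)` is the coefficient of `T^N` in the substituted `F_{1,D}`.
The identity `∑_{k ≤ n} C(n+2, k+1) B_{k+1}(x) = (n+2) x^{n+1} - 1` is a lower triangular row
reduction of determinant `D!` taking the rows `B_n(x)/n` to `x^n - 1/(n+1)`. That matrix is a
rank-one perturbation of the generalized Vandermonde matrix `(x_v^n)`, and counting powers of `T`
shows that only the term in which the last row becomes `-1/(D+1)` times the all-ones row reaches
`T^N`; it is `-(D+1)⁻¹ (-1)^{D-1} c`, whence `D! c G(0) = (-1)^D c / (D+1)`. -/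

namespace Matrix

variable {n R : Type*} [Fintype n] [DecidableEq n] [CommRing R]

theorem det_add_vecMulVec (A : Matrix n n R) (u v : n → R) :
    (A + vecMulVec u v).det = A.det + ∑ i, u i * (A.updateRow i v).det := by
  suffices h : ∀ s : Finset n, (A + vecMulVec (s.piecewise u 0) v).det
      = A.det + ∑ i ∈ s, u i * (A.updateRow i v).det by
    simpa using h Finset.univ
  intro s
  induction s using Finset.induction_on with
  | empty => simp
  | insert j s hj ih =>
    set w := s.piecewise u 0
    set M := A + vecMulVec w v
    have hwj : w j = 0 := Finset.piecewise_eq_of_notMem _ _ _ hj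
    have hMj : M j = A j := by ext k; simp [M, vecMulVec_apply, hwj]
    have hinsert : A + vecMulVec ((insert j s).piecewise u 0) v
        = M.updateRow j (A j + u j • v) := by
      ext i k
      by_cases hi : i = j
      · subst hi; simp [vecMulVec_apply, Finset.piecewise_insert]
      · simp [M, w, vecMulVec_apply, updateRow_apply, hi, Finset.piecewise_insert]
    -- Adding the multiple `w i • v` of row `j` to each row `i` does not change the determinant.
    have hrow : M.updateRow j v = (1 + vecMulVec w (Pi.single j 1)) * A.updateRow j v := by
      rw [Matrix.add_mul, Matrix.one_mul]
      ext i k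
      have hcol : (vecMulVec w (Pi.single j 1) * A.updateRow j v) i k = w i * v k := by
        simp [mul_apply, vecMulVec_apply, Pi.single_apply]
      by_cases hi : i = j
      · subst hi; simp [hcol, hwj]
      · simp [M, hcol, vecMulVec_apply, hi]
    have hunit : (1 + vecMulVec w (Pi.single j 1) : Matrix n n R).det = 1 := by
      rw [vecMulVec_eq Unit, det_one_add_replicateCol_mul_replicateRow]
      simp [hwj]
    rw [hinsert, det_updateRow_add, det_updateRow_smul, ← hMj, updateRow_eq_self, hrow, det_mul,
      hunit, one_mul, ih, Finset.sum_insert hj]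
    ring

theorem det_updateRow_last_one_powers {d : ℕ} (w : Fin (d + 1) → R) :
    ((of fun n v : Fin (d + 1) => w v ^ ((n : ℕ) + 1)).updateRow (Fin.last d) 1).det
      = (-1) ^ d * (vandermonde w).det := by
  have hrot : (of fun n v : Fin (d + 1) => w v ^ ((n : ℕ) + 1)).updateRow (Fin.last d) 1
      = (vandermonde w)ᵀ.submatrix (finRotate (d + 1)) id := by
    ext i j
    by_cases hi : i = Fin.last d
    · simp [hi]
    · simp [updateRow_apply, hi, Fin.val_add_one]
  rw [hrot, det_permute, det_transpose, sign_finRotate]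
  simp

end Matrix

namespace Polynomial

open Matrix

variable {n R : Type*} [Fintype n] [DecidableEq n] [CommRing R]

theorem det_X_pow_mul_C (e : n → ℕ) (B : Matrix n n R) :
    (of fun i j => (X : R[X]) ^ e i * C (B i j)).det = X ^ (∑ i, e i) * C B.det := by
  rw [← Finset.prod_pow_eq_pow_sum, RingHom.map_det, RingHom.mapMatrix_apply]
  exact det_mul_column (fun i => X ^ e i) (B.map C)

theorem det_vandermonde_C_mul_X {d : ℕ} (w : Fin d → R) :
    (vandermonde fun v => C (w v) * X).det
      = X ^ (∑ i : Fin d, (i : ℕ)) * C (vandermonde w).det := by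
  rw [← det_transpose, ← det_transpose (vandermonde w), ← det_X_pow_mul_C]
  congr 1
  ext i j
  rw [transpose_apply, vandermonde_apply, of_apply, transpose_apply, vandermonde_apply, mul_pow,
    C_pow, mul_comm]

theorem coeff_det_C_mul_X_pow_sub_C {d : ℕ} (w a : Fin (d + 1) → R) :
    (of fun n v : Fin (d + 1) => (C (w v) * X) ^ ((n : ℕ) + 1) - C (a n)).det.coeff
        (∑ i : Fin (d + 1), (i : ℕ))
      = -a (Fin.last d) * ((-1) ^ d * (vandermonde w).det) := by
  set N := ∑ i : Fin (d + 1), (i : ℕ)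
  set e : Fin (d + 1) → ℕ := fun n => (n : ℕ) + 1
  set V := of fun n v : Fin (d + 1) => w v ^ ((n : ℕ) + 1)
  set U := of fun n v : Fin (d + 1) => (X : R[X]) ^ e n * C (V n v)
  have hsplit : (of fun n v : Fin (d + 1) => (C (w v) * X) ^ ((n : ℕ) + 1) - C (a n))
      = U + vecMulVec (fun n => -C (a n)) 1 := by
    refine Matrix.ext fun n v => ?_
    simp only [U, V, e, of_apply, Matrix.add_apply, vecMulVec_apply, Pi.one_apply, mul_one,
      mul_pow, C_pow]
    ring
  have hrow (m : Fin (d + 1)) :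
      U.updateRow m 1 = of fun n v => X ^ Function.update e m 0 n * C (V.updateRow m 1 n v) := by
    ext n v
    by_cases hn : n = m
    · simp [hn]
    · simp [U, updateRow_apply, hn]
  have hexp (m : Fin (d + 1)) : ∑ n, Function.update e m 0 n + ((m : ℕ) + 1) = N + (d + 1) := by
    rw [Finset.sum_update_of_mem (Finset.mem_univ m), zero_add]
    have h := Finset.sum_sdiff (f := e) (Finset.subset_univ {m})
    rw [Finset.sum_singleton] at h
    rw [h]
    simp [N, e, Finset.sum_add_distrib]
  have hcoeff (k : ℕ) (r : R) : (X ^ k * C r).coeff N = if N = k then r else 0 := by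
    rw [mul_comm, coeff_C_mul_X_pow]
  have hterm (m : Fin (d + 1)) : (-C (a m) * (U.updateRow m 1).det).coeff N
      = if N = ∑ n, Function.update e m 0 n then -a m * (V.updateRow m 1).det else 0 := by
    rw [hrow, det_X_pow_mul_C, ← C_neg, mul_left_comm, ← C_mul, hcoeff]
  rw [hsplit, det_add_vecMulVec, coeff_add, finsetSum_coeff, det_X_pow_mul_C, hcoeff,
    if_neg (by simp [N, e, Finset.sum_add_distrib]),
    zero_add, Finset.sum_eq_single (Fin.last d)]
  · rw [hterm, if_pos, det_updateRow_last_one_powers]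
    have := hexp (Fin.last d)
    simp only [Fin.val_last] at this
    omega
  · intro m _ hm
    rw [hterm, if_neg]
    have := hexp m
    have := Fin.val_lt_last hm
    omega
  · simp

theorem sum_range_choose_smul_bernoulli_succ (n : ℕ) :
    ∑ k ∈ Finset.range (n + 1), ((n + 2).choose (k + 1) : ℚ) • bernoulli (k + 1)
      = ((n : ℚ) + 2) • (X : ℚ[X]) ^ (n + 1) - 1 := by
  have h := sum_bernoulli (n + 1)
  rw [Finset.sum_range_succ', bernoulli_zero, Nat.choose_zero_right, Nat.cast_one, one_smul,
    ← eq_sub_iff_add_eq] at h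
  rw [h, smul_X_eq_monomial]
  push_cast
  ring_nf

end Polynomial

section BernoulliMatrix

open Matrix Polynomial

variable {A : Type*} [CommRing A] [Algebra ℚ A] {D : ℕ}

noncomputable def bernoulliMatrix (y : Fin D → A) : Matrix (Fin D) (Fin D) A :=
  of fun n v => algebraMap ℚ A ((n : ℕ) + 1 : ℚ)⁻¹ * aeval (y v) (bernoulli ((n : ℕ) + 1))

variable (D) in
noncomputable def bernoulliToPowers : Matrix (Fin D) (Fin D) ℚ :=
  of fun n k =>
    if k ≤ n then ((k : ℕ) + 1) * ((n : ℕ) + 2).choose ((k : ℕ) + 1) / ((n : ℕ) + 2) else 0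

theorem bernoulliToPowers_mul_bernoulliMatrix (y : Fin D → A) :
    (bernoulliToPowers D).map (algebraMap ℚ A) * bernoulliMatrix y
      = of fun n v : Fin D => y v ^ ((n : ℕ) + 1) - algebraMap ℚ A ((n : ℕ) + 2 : ℚ)⁻¹ := by
  refine Matrix.ext fun n v => ?_
  set g : ℕ → A := fun k => if k ≤ n then algebraMap ℚ A ((n : ℕ) + 2 : ℚ)⁻¹ *
    (((n : ℕ) + 2).choose (k + 1) : ℚ) • aeval (y v) (bernoulli (k + 1)) else 0
  have hterm (k : Fin D) :
      (bernoulliToPowers D).map (algebraMap ℚ A) n k * bernoulliMatrix y k v = g k := by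
    simp only [g, map_apply, bernoulliToPowers, bernoulliMatrix, of_apply, Fin.val_fin_le]
    split_ifs
    · have hk1 : ((k : ℕ) + 1 : ℚ) ≠ 0 := by positivity
      rw [Algebra.smul_def, ← mul_assoc, ← mul_assoc, ← map_mul, ← map_mul]
      congr 2
      field_simp
    · rw [map_zero, zero_mul]
  have hrange : (Finset.range D).filter (· ≤ (n : ℕ)) = Finset.range ((n : ℕ) + 1) := by
    ext k
    simp only [Finset.mem_filter, Finset.mem_range]
    omega
  rw [mul_apply, Finset.sum_congr rfl fun k _ => hterm k, Fin.sum_univ_eq_sum_range g,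
    ← Finset.sum_filter, hrange, ← Finset.mul_sum]
  have hsum : ∑ k ∈ Finset.range ((n : ℕ) + 1),
      (((n : ℕ) + 2).choose (k + 1) : ℚ) • aeval (y v) (bernoulli (k + 1))
        = aeval (y v) (∑ k ∈ Finset.range ((n : ℕ) + 1),
            (((n : ℕ) + 2).choose (k + 1) : ℚ) • Polynomial.bernoulli (k + 1)) := by
    simp_rw [map_sum, map_smul]
  have hn2 : ((n : ℕ) + 2 : ℚ) ≠ 0 := by positivity
  rw [hsum, sum_range_choose_smul_bernoulli_succ, map_sub, map_smul, map_pow, aeval_X, map_one,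
    of_apply, Algebra.smul_def, mul_sub, ← mul_assoc, ← map_mul, inv_mul_cancel₀ hn2, map_one,
    one_mul, mul_one]

theorem det_bernoulliToPowers : (bernoulliToPowers D).det = D.factorial := by
  rw [det_of_isLowerTriangular (bernoulliToPowers D) fun i j hij => if_neg (not_le.mpr hij)]
  have hdiag (n : Fin D) : bernoulliToPowers D n n = (n : ℕ) + 1 := by
    rw [bernoulliToPowers, of_apply, if_pos le_rfl, Nat.choose_succ_self_right]
    push_cast
    field_simp
    ring
  simp_rw [hdiag]
  rw [Fin.prod_univ_eq_prod_range (fun i => (i : ℚ) + 1),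
    ← Finset.prod_range_add_one_eq_factorial]
  push_cast
  rfl

theorem factorial_mul_det_bernoulliMatrix (y : Fin D → A) :
    (D.factorial : A) * (bernoulliMatrix y).det
      = (of fun n v : Fin D =>
          y v ^ ((n : ℕ) + 1) - algebraMap ℚ A ((n : ℕ) + 2 : ℚ)⁻¹).det := by
  rw [← bernoulliToPowers_mul_bernoulliMatrix, det_mul, ← RingHom.mapMatrix_apply,
    ← RingHom.map_det, det_bernoulliToPowers, map_natCast]

theorem bernoulliMatrix_map {B : Type*} [CommRing B] [Algebra ℚ B] (f : A →ₐ[ℚ] B)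
    (y : Fin D → A) : f.mapMatrix (bernoulliMatrix y) = bernoulliMatrix (f ∘ y) := by
  refine Matrix.ext fun n v => ?_
  simp [bernoulliMatrix, aeval_algHom_apply]

end BernoulliMatrix

open Matrix Polynomial

theorem Fpoly_one_eq_det_bernoulliMatrix (D : ℕ) :
    Fpoly 1 D = (bernoulliMatrix (MvPolynomial.X : Fin D → MvPolynomial (Fin D) ℚ)).det := by
  rw [Fpoly, ← det_submatrix_equiv_self (Equiv.uniqueProd (Fin D) (Fin 1)).symm]
  congr 1
  refine Matrix.ext fun n v => ?_
  simp [bernoulliMatrix, MvPolynomial.algebraMap_eq]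

theorem vand_eq_det_vandermonde_s4 (D : ℕ) :
    vand D = (vandermonde (MvPolynomial.X : Fin D → MvPolynomial (Fin D) ℚ)).det := by
  rw [det_vandermonde, vand, Finset.prod_filter, Fintype.prod_prod_type]
  refine Finset.prod_congr rfl fun i _ => ?_
  rw [← Finset.prod_filter]
  exact Finset.prod_congr (by ext; simp) fun _ _ => rfl

theorem MvPolynomial.coeff_zero_aeval_C_mul_X {σ R : Type*} [CommSemiring R] (w : σ → R)
    (p : MvPolynomial σ R) :
    (MvPolynomial.aeval (fun i => Polynomial.C (w i) * Polynomial.X) p).coeff 0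
      = MvPolynomial.eval (fun _ => 0) p := by
  rw [coeff_zero_eq_eval_zero, ← Polynomial.coe_aeval_eq_eval, ← AlgHom.comp_apply,
    MvPolynomial.comp_aeval]
  simp

section Line

variable {D : ℕ} (w : Fin D → ℚ)

noncomputable def lineSubst : MvPolynomial (Fin D) ℚ →ₐ[ℚ] ℚ[X] :=
  MvPolynomial.aeval fun v => C (w v) * X

theorem lineSubst_vand :
    lineSubst w (vand D) = X ^ (∑ i : Fin D, (i : ℕ)) * C (vandermonde w).det := by
  rw [vand_eq_det_vandermonde_s4, AlgHom.map_det, ← det_vandermonde_C_mul_X]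
  congr 1
  refine Matrix.ext fun i j => ?_
  simp [lineSubst]

theorem coeff_factorial_mul_lineSubst_Fpoly {d : ℕ} (w : Fin (d + 1) → ℚ) :
    ((((d + 1)! : ℕ) : ℚ[X]) * lineSubst w (Fpoly 1 (d + 1))).coeff
        (∑ i : Fin (d + 1), (i : ℕ))
      = -((d : ℚ) + 2)⁻¹ * ((-1) ^ d * (vandermonde w).det) := by
  rw [Fpoly_one_eq_det_bernoulliMatrix, AlgHom.map_det, bernoulliMatrix_map,
    factorial_mul_det_bernoulliMatrix]
  simp only [Function.comp_apply, lineSubst, MvPolynomial.aeval_X, Polynomial.algebraMap_eq]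
  rw [coeff_det_C_mul_X_pow_sub_C, Fin.val_last]

end Line

theorem constant_term_of_G_general (D : ℕ) (G : MvPolynomial (Fin D) ℚ)
    (hG : Fpoly 1 D = vand D * G) :
    MvPolynomial.eval (fun _ : Fin D => (0 : ℚ)) G = (-1 : ℚ) ^ D / ((D + 1)! : ℚ) := by
  rcases D with _ | d
  · simp [Fpoly, vand] at hG
    simp [← hG]
  set w : Fin (d + 1) → ℚ := fun v => (v : ℚ) + 1
  have hc : (vandermonde w).det ≠ 0 :=
    det_vandermonde_ne_zero_iff.mpr fun i j h => Fin.ext (by simpa [w] using h)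
  have hcoeff := coeff_factorial_mul_lineSubst_Fpoly w
  have hsplit : C (((d + 1)! : ℕ) : ℚ) * lineSubst w (vand (d + 1) * G)
      = X ^ (∑ i : Fin (d + 1), (i : ℕ)) *
          (C ((d + 1)! * (vandermonde w).det) * lineSubst w G) := by
    rw [map_mul, lineSubst_vand, C_mul]
    ring
  rw [hG, ← map_natCast C, hsplit, coeff_X_pow_mul', if_pos le_rfl, Nat.sub_self, coeff_C_mul,
    lineSubst, MvPolynomial.coeff_zero_aeval_C_mul_X] at hcoeff
  field_simp at hcoeff
  rw [Nat.factorial_succ, Nat.cast_mul, eq_div_iff (by positivity)]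
  push_cast
  linear_combination hcoeff

/-- For D ≥ 1, if `F_{1,D} = ∏_{i<j}(x_j−x_i) · G`, then
`G(0,…,0) = (−1)^D/(D+1)!`. -/
theorem constant_term_of_G (D : ℕ) (hD : 1 ≤ D) (G : MvPolynomial (Fin D) ℚ)
    (hG : Fpoly 1 D = vand D * G) :
    MvPolynomial.eval (fun _ : Fin D => (0 : ℚ)) G = (-1 : ℚ) ^ D / ((D + 1)! : ℚ) :=
  constant_term_of_G_general D G hG
end

section
/- For every integer D ≥ 1, one has the polynomial identity \bar F_{1,D}(x_1,…,x_D) = (1/(D−1)!) · ∏_{1≤i<j≤D}(x_j−x_i). -/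
open Nat Finset

/-- `F̄_{r,D}(x_1,…,x_D)`: the determinant of the rD×rD matrix whose rows are indexed
(in lexicographic order) by pairs `(i,j)` encoding the row number `k = i·D + j ∈ {0,…,rD−1}`,
and whose columns are indexed by pairs `(m,v)` with `0 ≤ m ≤ r−1`, `1 ≤ v ≤ D` (lex order).
The first r rows (`k < r`, so `k = m'`) have entry 1 if `m = m'` and 0 otherwise; the
remaining rows correspond to `n = k − r + 1 ∈ {1,…,rD−r}` and have entry `B_{n+m}(x_v)/(n+m)`. -/
noncomputable def Fbar (r D : ℕ) : MvPolynomial (Fin D) ℚ :=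
  Matrix.det (Matrix.of fun (p q : Fin r × Fin D) =>
    if (p.1 : ℕ) * D + (p.2 : ℕ) < r then
      (if (q.1 : ℕ) = (p.1 : ℕ) * D + (p.2 : ℕ) then 1 else 0)
    else
      MvPolynomial.C ((((p.1 : ℕ) * D + (p.2 : ℕ) - r + 1 + (q.1 : ℕ) : ℕ) : ℚ))⁻¹ *
        Polynomial.aeval (MvPolynomial.X q.2)
          (Polynomial.bernoulli ((p.1 : ℕ) * D + (p.2 : ℕ) - r + 1 + (q.1 : ℕ))))

/-- `Δ̄_{r,D}`: the determinant of the analogous rD×rD rational matrix whose first r rows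
have entry `(−D)^{m'}` if `m = m'` and 0 otherwise, and whose remaining rows (indexed by
`n = 1,…,rD−r`) have `(n,(m,v))` entry `D^{n+m−1}·B_{n+m}(v/D)/(n+m)`. -/
noncomputable def deltaBar (r D : ℕ) : ℚ :=
  Matrix.det (Matrix.of fun (p q : Fin r × Fin D) =>
    if (p.1 : ℕ) * D + (p.2 : ℕ) < r then
      (if (q.1 : ℕ) = (p.1 : ℕ) * D + (p.2 : ℕ) then (-(D : ℚ)) ^ ((p.1 : ℕ) * D + (p.2 : ℕ)) else 0)
    else
      (D : ℚ) ^ ((p.1 : ℕ) * D + (p.2 : ℕ) - r + (q.1 : ℕ)) *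
        (Polynomial.bernoulli ((p.1 : ℕ) * D + (p.2 : ℕ) - r + 1 + (q.1 : ℕ))).eval
          (((q.2 : ℕ) + 1 : ℚ) / D) /
        (((p.1 : ℕ) * D + (p.2 : ℕ) - r + 1 + (q.1 : ℕ) : ℕ) : ℚ))

/-!
For `r = 1` the first row is the row of ones, i.e. of `B_0(x_v)`, and row `n ≥ 1` is
`B_n(x_v)/n`. Pulling out the weights `1/n` leaves the matrix `(B_n(x_v))`. Since each `B_n` is
monic of degree `n`, row operations turn it into the Vandermonde matrix `(x_v^n)`, whose
determinant is `∏_{i<j} (x_j − x_i)`, while the weights multiply to `1/(D−1)!`.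
-/

namespace Polynomial

theorem coeff_bernoulli_self_s9 (n : ℕ) : (bernoulli n).coeff n = 1 := by
  simp [coeff_bernoulli]

theorem natDegree_bernoulli_le_s9 (n : ℕ) : (bernoulli n).natDegree ≤ n :=
  natDegree_le_iff_coeff_eq_zero.2 fun i hi => by simp [coeff_bernoulli, not_le.2 hi]

theorem monic_bernoulli (n : ℕ) : (bernoulli n).Monic :=
  monic_of_natDegree_le_of_coeff_eq_one n (natDegree_bernoulli_le_s9 n) (coeff_bernoulli_self_s9 n)

theorem natDegree_bernoulli (n : ℕ) : (bernoulli n).natDegree = n :=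
  natDegree_eq_of_le_of_coeff_ne_zero (natDegree_bernoulli_le_s9 n) (by simp [coeff_bernoulli_self_s9])

open Matrix in
theorem det_aeval_bernoulli_eq_det_vandermonde {R : Type*} [CommRing R] [Nontrivial R]
    [Algebra ℚ R] {n : ℕ} (v : Fin n → R) :
    (Matrix.of fun i j : Fin n => aeval (v i) (bernoulli j)).det = (vandermonde v).det := by
  rw [det_eval_matrixOfPolynomials_eq_det_vandermonde v
    (fun j => (bernoulli j).map (algebraMap ℚ R))
    (fun j => by rw [(monic_bernoulli j).natDegree_map, natDegree_bernoulli])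
    (fun j => (monic_bernoulli j).map _)]
  simp only [eval_map_algebraMap]

end Polynomial

theorem vand_eq_prod_Ioi (D : ℕ) :
    vand D = ∏ i : Fin D, ∏ j ∈ Ioi i, (MvPolynomial.X j - MvPolynomial.X i) := by
  rw [vand, prod_filter, Fintype.prod_prod_type]
  refine prod_congr rfl fun i _ => ?_
  rw [← filter_lt_eq_Ioi, prod_filter]

theorem prod_range_succ_ite_inv (n : ℕ) :
    ∏ j ∈ range (n + 1), (if j = 0 then 1 else (j : ℚ)⁻¹) = ((n ! : ℕ) : ℚ)⁻¹ := by
  rw [prod_range_succ', ← prod_range_add_one_eq_factorial]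
  push_cast
  simp [prod_inv_distrib]

theorem Fbar_one_eq_mul_det (D : ℕ) :
    Fbar 1 D = MvPolynomial.C (∏ j : Fin D, if (j : ℕ) = 0 then 1 else ((j : ℕ) : ℚ)⁻¹) *
      (Matrix.of fun v j : Fin D =>
        Polynomial.aeval (MvPolynomial.X v) (Polynomial.bernoulli j)).det := by
  rw [map_prod, ← Matrix.det_mul_row, ← Matrix.det_transpose, Fbar,
    ← Matrix.det_submatrix_equiv_self (Equiv.uniqueProd (Fin D) (Fin 1)).symm]
  congr 1
  ext j v
  by_cases hj : (j : ℕ) = 0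
  · simp [hj]
  · have hj1 : 1 ≤ (j : ℕ) := Nat.one_le_iff_ne_zero.2 hj
    simp [hj, Nat.sub_add_cancel hj1, Nat.cast_sub hj1]

/-- For every D ≥ 1, `F̄_{1,D}(x_1,…,x_D) = (1/(D−1)!)·∏_{i<j}(x_j−x_i)`. -/
theorem Fbar_one_D (D : ℕ) (hD : 1 ≤ D) :
    Fbar 1 D = MvPolynomial.C (((D - 1)! : ℚ))⁻¹ * vand D := by
  obtain ⟨n, rfl⟩ : ∃ n, D = n + 1 := ⟨D - 1, by omega⟩
  rw [Fbar_one_eq_mul_det, Polynomial.det_aeval_bernoulli_eq_det_vandermonde,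
    Matrix.det_vandermonde, ← vand_eq_prod_Ioi,
    Fin.prod_univ_eq_prod_range (fun j => if j = 0 then (1 : ℚ) else (j : ℚ)⁻¹),
    prod_range_succ_ite_inv, Nat.add_sub_cancel]
end

section
/- For every integer D ≥ 1, the determinant M_D of the D×D lower Hessenberg matrix whose (i,j) entry (1 ≤ i,j ≤ D) equals C(i, j−1)·B_{i−j+1} when j ≤ i, equals 1 when j = i+1, and equals 0 when j > i+1, satisfies M_D = (−1)^D/(D+1). Here B_k denotes the k-th Bernoulli number and C(i,j−1) the binomial coefficient. -/
/-!
Let `P = (C(i,j) B_{i-j})_{0 ≤ i,j ≤ D}`, a lower unitriangular matrix. The Hessenberg matrix is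
`P` with its first row and last column deleted, so its determinant is `(-1)^D` times the cofactor
of `P` at `(0, D)`, which is the entry `(P⁻¹)_{D,0}`. Matrices `(C(i,j) a_{i-j})` multiply by
binomial convolution of their sequences, and `B` and `(1/(k+1))_k` are inverse for binomial
convolution (their exponential generating functions are `z/(e^z-1)` and `(e^z-1)/z`). Hence
`P⁻¹ = (C(i,j)/(i-j+1))`, whose `(D,0)` entry is `1/(D+1)`.
-/

open Nat Finset

variable {R : Type*}

def binomialConv [CommSemiring R] (a b : ℕ → R) (n : ℕ) : R :=
  ∑ p ∈ antidiagonal n, (n.choose p.1 : R) * a p.1 * b p.2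

-- Above the diagonal `i - j` truncates to `0`, but there `i.choose j = 0`.
def binomialMatrix [Semiring R] (a : ℕ → R) (n : ℕ) : Matrix (Fin n) (Fin n) R :=
  Matrix.of fun i j => ((i : ℕ).choose j : R) * a (i - j)

theorem binomialConv_eq_sum_range [CommSemiring R] (a b : ℕ → R) (n : ℕ) :
    binomialConv a b n = ∑ q ∈ range (n + 1), (n.choose q : R) * a (n - q) * b q := by
  rw [binomialConv, ← Nat.sum_antidiagonal_swap]
  simp only [Prod.fst_swap, Prod.snd_swap]
  rw [Nat.sum_antidiagonal_eq_sum_range_succ (fun q p => (n.choose p : R) * a p * b q)]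
  refine sum_congr rfl fun q hq => ?_
  rw [choose_symm (by simpa [Nat.lt_succ_iff] using hq)]

theorem binomialMatrix_mul [CommSemiring R] (a b : ℕ → R) (n : ℕ) :
    binomialMatrix a n * binomialMatrix b n = binomialMatrix (binomialConv a b) n := by
  ext i k
  simp only [binomialMatrix, Matrix.mul_apply, Matrix.of_apply]
  set f : ℕ → R := fun j => ((i : ℕ).choose j : R) * a (i - j) * ((j.choose k : R) * b (j - k))
  change ∑ j : Fin n, f j = _
  rw [Fin.sum_univ_eq_sum_range f]
  obtain hik | hki := lt_or_ge (i : ℕ) k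
  · rw [choose_eq_zero_of_lt hik, cast_zero, zero_mul]
    refine sum_eq_zero fun j _ => ?_
    obtain hij | hji := lt_or_ge (i : ℕ) j
    · simp [f, choose_eq_zero_of_lt hij]
    · simp [f, choose_eq_zero_of_lt (hji.trans_lt hik)]
  have hsupp : Ico (k : ℕ) (i + 1) ⊆ range n := fun j hj => by
    simp only [mem_Ico, mem_range] at hj ⊢; omega
  rw [← sum_subset hsupp fun j _ hj => ?_, sum_Ico_eq_sum_range, binomialConv_eq_sum_range,
    mul_sum, Nat.sub_add_comm hki]
  · refine sum_congr rfl fun q _ => ?_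
    have hchoose : (i : ℕ).choose (k + q) * (k + q).choose k =
        (i : ℕ).choose k * ((i : ℕ) - k).choose q := by
      simpa using choose_mul (n := i) (le_add_right (k : ℕ) q)
    simp only [f, Nat.add_sub_cancel_left, Nat.sub_add_eq]
    rw [mul_mul_mul_comm, ← cast_mul, hchoose, cast_mul]
    ring
  · simp only [mem_Ico, not_and_or, not_le, not_lt] at hj
    rcases hj with hjk | hij
    · simp [f, choose_eq_zero_of_lt hjk]
    · simp [f, choose_eq_zero_of_lt (Nat.lt_of_succ_le hij)]

theorem binomialMatrix_single_zero_one [Semiring R] (n : ℕ) :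
    binomialMatrix (Pi.single 0 1) n = (1 : Matrix (Fin n) (Fin n) R) := by
  ext i j
  rcases lt_trichotomy (i : ℕ) j with h | h | h
  · simp [binomialMatrix, choose_eq_zero_of_lt h, Fin.ne_of_lt h]
  · obtain rfl := Fin.ext h
    simp [binomialMatrix]
  · simp [binomialMatrix, (Fin.ne_of_lt h).symm, Nat.sub_ne_zero_of_lt h]

theorem det_binomialMatrix [CommRing R] (a : ℕ → R) (n : ℕ) :
    (binomialMatrix a n).det = a 0 ^ n := by
  rw [Matrix.det_of_isLowerTriangular _ fun i j (hij : i < j) => by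
    simp [binomialMatrix, choose_eq_zero_of_lt (Fin.lt_def.mp hij)]]
  simp [binomialMatrix]

theorem binomialMatrix_submatrix_succ_castSucc [Semiring R] (a : ℕ → R) (n : ℕ) :
    (binomialMatrix a (n + 1)).submatrix Fin.succ Fin.castSucc =
      Matrix.of fun i j : Fin n =>
        if (j : ℕ) ≤ i then ((i + 1 : ℕ).choose j : R) * a (i + 1 - j)
        else if (j : ℕ) = i + 1 then a 0 else 0 := by
  ext i j
  simp only [binomialMatrix, Matrix.submatrix_apply, Matrix.of_apply, Fin.val_succ,
    Fin.val_castSucc]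
  split_ifs with hji hj
  · rfl
  · simp [hj]
  · simp [choose_eq_zero_of_lt (show (i : ℕ) + 1 < j by omega)]

theorem binomialConv_bernoulli_one_div_succ :
    binomialConv bernoulli (fun k => 1 / (k + 1 : ℚ)) = Pi.single 0 1 := by
  ext n
  rw [Pi.single_apply, ← bernoulli_spec', binomialConv]
  refine sum_congr rfl fun p hp => ?_
  rw [HasAntidiagonal.mem_antidiagonal] at hp
  subst hp
  rw [choose_symm_add]
  ring

theorem adjugate_binomialMatrix_bernoulli (n : ℕ) :
    (binomialMatrix bernoulli n).adjugate = binomialMatrix (fun k => 1 / (k + 1 : ℚ)) n := by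
  have hinv : (binomialMatrix bernoulli n)⁻¹ = binomialMatrix (fun k => 1 / (k + 1 : ℚ)) n :=
    Matrix.inv_eq_right_inv <| by
      rw [binomialMatrix_mul, binomialConv_bernoulli_one_div_succ, binomialMatrix_single_zero_one]
  rw [← hinv, Matrix.inv_def, det_binomialMatrix, bernoulli_zero, one_pow, Ring.inverse_one,
    one_smul]

theorem Matrix.det_submatrix_succ_castSucc [CommRing R] {n : ℕ}
    (A : Matrix (Fin (n + 1)) (Fin (n + 1)) R) :
    (A.submatrix Fin.succ Fin.castSucc).det = (-1) ^ n * A.adjugate (Fin.last n) 0 := by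
  rw [adjugate_fin_succ_eq_det_submatrix, Fin.succAbove_zero, Fin.succAbove_last, Fin.val_zero,
    Fin.val_last, zero_add, ← mul_assoc, ← mul_pow, neg_one_mul, neg_neg, one_pow, one_mul]

theorem hessenberg_bernoulli_det_general (D : ℕ) :
    Matrix.det (Matrix.of fun (i j : Fin D) =>
      if (j : ℕ) ≤ (i : ℕ) then (Nat.choose ((i : ℕ) + 1) (j : ℕ) : ℚ) * bernoulli ((i : ℕ) + 1 - (j : ℕ))
      else if (j : ℕ) = (i : ℕ) + 1 then 1 else 0) = (-1 : ℚ) ^ D / ((D : ℚ) + 1) := by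
  have hP := binomialMatrix_submatrix_succ_castSucc bernoulli D
  rw [bernoulli_zero] at hP
  rw [← hP, Matrix.det_submatrix_succ_castSucc, adjugate_binomialMatrix_bernoulli]
  simp [binomialMatrix, div_eq_mul_inv]

/-- The determinant `M_D` of the D×D lower Hessenberg matrix whose (i,j)
entry (1-indexed) is `C(i,j−1)·B_{i−j+1}` for `j ≤ i`, is 1 for `j = i+1`, and is 0 for
`j > i+1`, equals `(−1)^D/(D+1)`.  (Here rows and columns are 0-indexed, so the 1-indexed
entry at `(i+1,j+1)` is `C(i+1,j)·B_{i+1−j}` for `j ≤ i`.) -/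
theorem hessenberg_bernoulli_det (D : ℕ) (hD : 1 ≤ D) :
    Matrix.det (Matrix.of fun (i j : Fin D) =>
      if (j : ℕ) ≤ (i : ℕ) then (Nat.choose ((i : ℕ) + 1) (j : ℕ) : ℚ) * bernoulli ((i : ℕ) + 1 - (j : ℕ))
      else if (j : ℕ) = (i : ℕ) + 1 then 1 else 0) = (-1 : ℚ) ^ D / ((D : ℚ) + 1) :=
  hessenberg_bernoulli_det_general D
end

section
/- Let ℓ ≥ 1 and 1 ≤ j ≤ ℓ+1 be integers and let x_1,…,x_j be pairwise distinct rational numbers (or elements of any field of characteristic zero). Then the (j−1)-st divided difference of the Bernoulli polynomial B_ℓ at the nodes x_1,…,x_j, namely Σ_{k=1}^{j} B_ℓ(x_k)/∏_{i≠k}(x_k−x_i), equals Σ_{t=0}^{ℓ−j+1} C(ℓ, t+j−1)·B_{ℓ−j+1−t}·h_t(x_1,…,x_j), where h_t denotes the complete homogeneous symmetric polynomial of degree t (the sum of all monomials of degree t in x_1,…,x_j, with h_0 = 1) and B_k denotes the k-th Bernoulli number. -/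
/-!
Expanding `B_ℓ(y) = ∑ᵢ C(ℓ, i) B_{ℓ-i} yⁱ`, the claim reduces by linearity to divided differences
of monomials: `[x₁, …, x_j] yⁿ = h_{n+1-j}(x₁, …, x_j)` if `j ≤ n + 1` and `0` otherwise.
For `n < j` this is the leading-coefficient formula of Lagrange interpolation. For larger `n`,
write `yⁿ⁺¹ = x₁ yⁿ + (y - x₁) yⁿ`: multiplying by `y - x₁` removes the node `x₁`, which matches
the recursion `h_{t+1}(x₁, …, x_j) = x₁ h_t(x₁, …, x_j) + h_{t+1}(x₂, …, x_j)`.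
-/

open Nat Finset

namespace MvPolynomial

variable {σ R : Type*} [CommSemiring R]

theorem hsymm_of_isEmpty [Fintype σ] [DecidableEq σ] [IsEmpty σ] {n : ℕ} (hn : n ≠ 0) :
    hsymm σ R n = 0 := by
  obtain ⟨n, rfl⟩ := Nat.exists_eq_succ_of_ne_zero hn
  simp [hsymm]

theorem hsymm_option_succ [Fintype σ] [DecidableEq σ] (n : ℕ) :
    hsymm (Option σ) R (n + 1) =
      X none * hsymm (Option σ) R n + rename some (hsymm σ R (n + 1)) := by
  simp only [hsymm]
  rw [← symOptionSuccEquiv.symm.sum_comp, Fintype.sum_sum_type, mul_sum, map_sum]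
  congr 1
  · simp [symOptionSuccEquiv, Sym.coe_cons]
  · simp [symOptionSuccEquiv, Multiset.map_map, map_multiset_prod]

theorem hsymm_fin_succ (n t : ℕ) :
    hsymm (Fin (n + 1)) R (t + 1) =
      X 0 * hsymm (Fin (n + 1)) R t + rename Fin.succ (hsymm (Fin n) R (t + 1)) := by
  rw [← rename_hsymm _ R (t + 1) (_root_.finSuccEquiv n).symm,
    ← rename_hsymm _ R t (_root_.finSuccEquiv n).symm, hsymm_option_succ]
  simp [rename_rename, Function.comp_def]

end MvPolynomial

theorem Fin.prod_univ_erase_succ {M : Type*} [CommMonoid M] {n : ℕ} (g : Fin (n + 1) → M)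
    (k : Fin n) : ∏ i ∈ univ.erase k.succ, g i = g 0 * ∏ i ∈ univ.erase k, g i.succ := by
  have : univ.erase k.succ =
      Finset.cons 0 ((univ.erase k).map (Fin.succEmb n)) (by simp [Fin.succEmb]) := by
    ext i; cases i using Fin.cases <;> simp [Fin.succEmb, (Fin.succ_ne_zero k).symm]
  rw [this, Finset.prod_cons, Finset.prod_map]
  rfl

section DividedDifference

variable {K ι : Type*} [Field K] [Fintype ι] [DecidableEq ι]

@[simps]
def dividedDifference (x : ι → K) : (K → K) →ₗ[K] K where
  toFun f := ∑ k, f (x k) / ∏ i ∈ univ.erase k, (x k - x i)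
  map_add' f g := by simp only [Pi.add_apply, add_div, sum_add_distrib]
  map_smul' c f := by
    simp only [Pi.smul_apply, smul_eq_mul, mul_div_assoc, ← mul_sum, RingHom.id_apply]

open Polynomial in
theorem dividedDifference_eval_eq_coeff {x : ι → K} (hx : Function.Injective x) {P : K[X]}
    (hP : P.degree < Fintype.card ι) :
    dividedDifference x (P.eval ·) = P.coeff (Fintype.card ι - 1) := by
  rw [← Finset.card_univ] at hP ⊢
  exact (Lagrange.coeff_eq_sum hx.injOn hP).symm

theorem dividedDifference_pow_of_lt_card {x : ι → K} (hx : Function.Injective x) {n : ℕ}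
    (hn : n < Fintype.card ι) :
    dividedDifference x (· ^ n) = if n + 1 = Fintype.card ι then 1 else 0 := by
  have := dividedDifference_eval_eq_coeff hx (P := .X ^ n) (by simpa using mod_cast hn)
  simp only [Polynomial.eval_pow, Polynomial.eval_X, Polynomial.coeff_X_pow] at this
  rw [this]
  exact if_congr (by omega) rfl rfl

theorem dividedDifference_fin_succ {n : ℕ} {x : Fin (n + 1) → K} (hx : Function.Injective x)
    (f : K → K) :
    dividedDifference x (fun y ↦ (y - x 0) * f y) = dividedDifference (x ∘ Fin.succ) f := by
  simp only [dividedDifference_apply, Fin.sum_univ_succ, sub_self, zero_mul, zero_div, zero_add,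
    Fin.prod_univ_erase_succ]
  refine sum_congr rfl fun k _ ↦ mul_div_mul_left _ _ ?_
  exact sub_ne_zero.2 (hx.ne (Fin.succ_ne_zero k))

theorem dividedDifference_pow_succ {n : ℕ} {x : Fin (n + 1) → K} (hx : Function.Injective x)
    (m : ℕ) :
    dividedDifference x (· ^ (m + 1)) =
      x 0 * dividedDifference x (· ^ m) + dividedDifference (x ∘ Fin.succ) (· ^ m) := by
  rw [← dividedDifference_fin_succ hx, ← smul_eq_mul, ← map_smul, ← map_add]
  congr 1
  ext y
  simp only [Pi.add_apply, Pi.smul_apply, smul_eq_mul]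
  ring

theorem dividedDifference_pow {j n : ℕ} {x : Fin j → K} (hx : Function.Injective x)
    (hjn : j ≤ n + 1) :
    dividedDifference x (· ^ n) =
      MvPolynomial.eval x (MvPolynomial.hsymm (Fin j) K (n + 1 - j)) := by
  induction n generalizing j with
  | zero => interval_cases j <;> simp
  | succ m ih =>
    obtain rfl | hjm := hjn.eq_or_lt
    · simp [dividedDifference_pow_of_lt_card hx]
    cases j with
    | zero => simp [MvPolynomial.hsymm_of_isEmpty]
    | succ i =>
      rw [dividedDifference_pow_succ hx, ih hx (by omega),
        ih (hx.comp (Fin.succ_injective _)) (by omega),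
        show m + 1 + 1 - (i + 1) = m + 1 - (i + 1) + 1 by omega,
        show m + 1 - i = m + 1 - (i + 1) + 1 by omega, MvPolynomial.hsymm_fin_succ]
      simp [MvPolynomial.eval_rename]

end DividedDifference

theorem divided_difference_bernoulli_general (ℓ j : ℕ) (hj : 1 ≤ j) (hjℓ : j ≤ ℓ + 1)
    (x : Fin j → ℚ) (hx : Function.Injective x) :
    ∑ k : Fin j,
        (Polynomial.bernoulli ℓ).eval (x k) / ∏ i ∈ Finset.univ.erase k, (x k - x i) =
      ∑ t ∈ Finset.range (ℓ + 1 - j + 1),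
        (Nat.choose ℓ (t + (j - 1)) : ℚ) * bernoulli (ℓ + 1 - j - t) *
          MvPolynomial.eval x (MvPolynomial.hsymm (Fin j) ℚ t) := by
  have hB : (fun y ↦ (Polynomial.bernoulli ℓ).eval y) =
      ∑ i ∈ range (ℓ + 1), (bernoulli (ℓ - i) * ℓ.choose i) • (· ^ i) := by
    ext y
    simp [Polynomial.bernoulli_def, Polynomial.eval_finsetSum, mul_comm]
  rw [← dividedDifference_apply x (fun y ↦ (Polynomial.bernoulli ℓ).eval y), hB, map_sum,
    ← sum_range_add_sum_Ico _ (by omega : j - 1 ≤ ℓ + 1), sum_eq_zero fun i hi ↦ ?_, zero_add,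
    sum_Ico_eq_sum_range]
  · refine sum_congr (by congr 1; omega) fun t _ ↦ ?_
    rw [map_smul, dividedDifference_pow hx (by omega), smul_eq_mul,
      show ℓ - (j - 1 + t) = ℓ + 1 - j - t by omega, show j - 1 + t + 1 - j = t by omega,
      add_comm (j - 1) t]
    ring
  · rw [mem_range] at hi
    rw [map_smul, dividedDifference_pow_of_lt_card hx (by simp; omega), if_neg (by simp; omega),
      smul_zero]

/-- For integers ℓ ≥ 1 and 1 ≤ j ≤ ℓ+1 and pairwise distinct rationals
x_1,…,x_j, the (j−1)-st divided difference of the Bernoulli polynomial B_ℓ at x_1,…,x_j,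
namely `Σ_{k=1}^{j} B_ℓ(x_k)/∏_{i≠k}(x_k−x_i)`, equals
`Σ_{t=0}^{ℓ−j+1} C(ℓ,t+j−1)·B_{ℓ−j+1−t}·h_t(x_1,…,x_j)`, where `h_t` is the complete
homogeneous symmetric polynomial of degree t and `B_k` the k-th Bernoulli number. -/
theorem divided_difference_bernoulli (ℓ j : ℕ) (hℓ : 1 ≤ ℓ) (hj : 1 ≤ j) (hjℓ : j ≤ ℓ + 1)
    (x : Fin j → ℚ) (hx : Function.Injective x) :
    ∑ k : Fin j,
        (Polynomial.bernoulli ℓ).eval (x k) / ∏ i ∈ Finset.univ.erase k, (x k - x i) =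
      ∑ t ∈ Finset.range (ℓ + 1 - j + 1),
        (Nat.choose ℓ (t + (j - 1)) : ℚ) * bernoulli (ℓ + 1 - j - t) *
          MvPolynomial.eval x (MvPolynomial.hsymm (Fin j) ℚ t) :=
  divided_difference_bernoulli_general ℓ j hj hjℓ x hx
end
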